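/- Let q > 0 be real and set f(k₁,k₂) = 3 + 2cos k₁ + 2cos k₂ + 2cos(k₁ − k₂). For integers t₁, t₂ define ε(t₁,t₂) = inf{ √(f(k) + q²) : k ∈ ℝ², t₁k₁ + t₂k₂ ∈ 2πℤ } − q. Then there exists a constant C > 0 such that for all coprime integers t₁, t₂ with t₁ − t₂ not divisible by 3, | ε(t₁,t₂) − π² / (6q(t₁² + t₁t₂ + t₂²)) | ≤ C · (t₁² + t₂²)^{−3/2}. -/

import Mathlib

open scoped Real

/-- The hexagonal-lattice symbol `f(k₁,k₂) = 3 + 2cos k₁ + 2cos k₂ + 2cos(k₁−k₂)`. -/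
noncomputable def hexSymbol (k₁ k₂ : ℝ) : ℝ :=
  3 + 2*Real.cos k₁ + 2*Real.cos k₂ + 2*Real.cos (k₁ - k₂)

/-- `ε(t₁,t₂)`: the opening of the nanotube spectral gap beyond `[3−q, 3+q]`. -/
noncomputable def gapEps (q : ℝ) (t₁ t₂ : ℤ) : ℝ :=
  sInf ((fun k : ℝ × ℝ => Real.sqrt (hexSymbol k.1 k.2 + q^2)) ''
    {k : ℝ × ℝ | ∃ n : ℤ, (t₁ : ℝ) * k.1 + (t₂ : ℝ) * k.2 = 2*π*n}) - q

/-!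
The symbol `f` vanishes exactly at `±K` modulo `2πℤ²`, where `K = (2π/3, -2π/3)`, and
`f(K + p) = Q(p) + O(‖p‖³)` with `Q(p) = p₁² - p₁p₂ + p₂²`. Since `t·K = 2π(t₁ - t₂)/3` and
`3 ∤ t₁ - t₂`, every point `K + p` of the chiral line `t·k ∈ 2πℤ` has `|t·p| ≥ 2π/3`; the
Cauchy–Schwarz inequality for `Q` and its dual form `(4/3)(t₁² + t₁t₂ + t₂²)` then gives
`Q(p) ≥ π²/(3(t₁² + t₁t₂ + t₂²))`, with equality at a point `p = O(1/|t|)`. Away from the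
Dirac points `f` is bounded below by compactness of a period cell. Hence the minimum of `f` on
the chiral line is `π²/(3(t₁² + t₁t₂ + t₂²)) + O(|t|⁻³)`, and `√(x + q²) - q = x/(2q) + O(x²)`
turns this into the estimate for `ε`.
-/

open Real Function

lemma hexSymbol_eq_sq_add_sq (a b : ℝ) :
    hexSymbol a b = (1 + cos a + cos b) ^ 2 + (sin a + sin b) ^ 2 := by
  unfold hexSymbol
  rw [cos_sub]
  linear_combination -sin_sq_add_cos_sq a - sin_sq_add_cos_sq b

lemma hexSymbol_nonneg (k : ℝ × ℝ) : 0 ≤ uncurry hexSymbol k := by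
  rw [uncurry, hexSymbol_eq_sq_add_sq]; positivity

lemma hexSymbol_le_nine (k : ℝ × ℝ) : uncurry hexSymbol k ≤ 9 := by
  simp only [uncurry, hexSymbol]
  linarith [cos_le_one k.1, cos_le_one k.2, cos_le_one (k.1 - k.2)]

lemma continuous_uncurry_hexSymbol : Continuous (uncurry hexSymbol) := by
  unfold uncurry hexSymbol; fun_prop

noncomputable def latticeVec (m : ℤ × ℤ) : ℝ × ℝ := (m.1 * (2 * π), m.2 * (2 * π))

lemma latticeVec_neg (m : ℤ × ℤ) : latticeVec (-m) = -latticeVec m := by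
  ext <;> simp [latticeVec]

lemma hexSymbol_neg (k : ℝ × ℝ) : uncurry hexSymbol (-k) = uncurry hexSymbol k := by
  simp only [uncurry, hexSymbol, Prod.fst_neg, Prod.snd_neg, ← neg_sub', cos_neg]

lemma hexSymbol_add_latticeVec (k : ℝ × ℝ) (m : ℤ × ℤ) :
    uncurry hexSymbol (k + latticeVec m) = uncurry hexSymbol k := by
  have hdiff : k.1 + m.1 * (2 * π) - (k.2 + m.2 * (2 * π))
      = k.1 - k.2 + (m.1 - m.2 : ℤ) * (2 * π) := by
    push_cast; ring
  simp only [uncurry, hexSymbol, latticeVec, Prod.fst_add, Prod.snd_add, hdiff,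
    cos_add_int_mul_two_pi]

noncomputable def diracPoint : ℝ × ℝ := (2 * π / 3, -(2 * π / 3))

noncomputable def diracSet : Set (ℝ × ℝ) :=
  {z | ∃ m : ℤ × ℤ, z + latticeVec m = diracPoint ∨ -z + latticeVec m = diracPoint}

lemma cos_two_pi_div_three : cos (2 * π / 3) = -(1 / 2) := by
  rw [show 2 * π / 3 = π - π / 3 by ring, cos_pi_sub, cos_pi_div_three]

lemma sin_two_pi_div_three : sin (2 * π / 3) = √3 / 2 := by
  rw [show 2 * π / 3 = π - π / 3 by ring, sin_pi_sub, sin_pi_div_three]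

lemma exists_eq_of_cos_eq_neg_half {x : ℝ} (h : cos x = -(1 / 2)) :
    ∃ m : ℤ, (x = 2 * π / 3 + m * (2 * π) ∧ sin x = √3 / 2) ∨
      (x = -(2 * π / 3) + m * (2 * π) ∧ sin x = -(√3 / 2)) := by
  obtain ⟨m, hm | hm⟩ := cos_eq_cos_iff.1 (h.trans cos_two_pi_div_three.symm)
  · have hx : x = 2 * π / 3 + (-m : ℤ) * (2 * π) := by push_cast; linarith
    refine ⟨-m, Or.inl ⟨hx, ?_⟩⟩
    rw [hx, sin_add_int_mul_two_pi, sin_two_pi_div_three]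
  · have hx : x = -(2 * π / 3) + m * (2 * π) := by linarith
    refine ⟨m, Or.inr ⟨hx, ?_⟩⟩
    rw [hx, sin_add_int_mul_two_pi, sin_neg, sin_two_pi_div_three]

lemma mem_diracSet_of_hexSymbol_eq_zero {k : ℝ × ℝ} (h : uncurry hexSymbol k = 0) :
    k ∈ diracSet := by
  obtain ⟨a, b⟩ := k
  have hsq := hexSymbol_eq_sq_add_sq a b
  simp only [uncurry_apply_pair] at h
  have hcos : 1 + cos a + cos b = 0 := by nlinarith [sq_nonneg (sin a + sin b)]
  have hsin : sin a + sin b = 0 := by nlinarith [sq_nonneg (1 + cos a + cos b)]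
  have hca : cos a = -(1 / 2) := by nlinarith [sin_sq_add_cos_sq a, sin_sq_add_cos_sq b]
  have hcb : cos b = -(1 / 2) := by linarith
  have h3 : 0 < √3 := by positivity
  obtain ⟨m₁, ⟨ha, hsa⟩ | ⟨ha, hsa⟩⟩ := exists_eq_of_cos_eq_neg_half hca <;>
  obtain ⟨m₂, ⟨hb, hsb⟩ | ⟨hb, hsb⟩⟩ := exists_eq_of_cos_eq_neg_half hcb
  · linarith
  · refine ⟨(-m₁, -m₂), Or.inl ?_⟩
    simp only [latticeVec, diracPoint, Prod.mk_add_mk, Prod.mk.injEq, ha, hb]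
    push_cast; constructor <;> ring
  · refine ⟨(m₁, m₂), Or.inr ?_⟩
    simp only [latticeVec, diracPoint, Prod.neg_mk, Prod.mk_add_mk, Prod.mk.injEq, ha, hb]
    constructor <;> ring
  · linarith

lemma add_latticeVec_mem_diracSet {z : ℝ × ℝ} (hz : z ∈ diracSet) (m : ℤ × ℤ) :
    z + latticeVec m ∈ diracSet := by
  obtain ⟨m', h | h⟩ := hz
  · refine ⟨m' - m, Or.inl ?_⟩
    rw [← h]; ext <;> simp [latticeVec] <;> ring
  · refine ⟨m' + m, Or.inr ?_⟩
    rw [← h]; ext <;> simp [latticeVec] <;> ring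

lemma exists_add_latticeVec_mem_Icc (k : ℝ × ℝ) :
    ∃ m : ℤ × ℤ, k + latticeVec m ∈ Set.Icc 0 (2 * π) ×ˢ Set.Icc 0 (2 * π) := by
  have h2π : 0 < 2 * π := by positivity
  refine ⟨(-⌊k.1 / (2 * π)⌋, -⌊k.2 / (2 * π)⌋), ⟨⟨?_, ?_⟩, ?_, ?_⟩⟩ <;>
    simp only [latticeVec, Prod.fst_add, Prod.snd_add, Int.cast_neg, neg_mul, ← sub_eq_add_neg]
  · exact Int.sub_floor_div_mul_nonneg _ h2π
  · exact (Int.sub_floor_div_mul_lt _ h2π).le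
  · exact Int.sub_floor_div_mul_nonneg _ h2π
  · exact (Int.sub_floor_div_mul_lt _ h2π).le

lemma exists_pos_le_hexSymbol_of_le_dist {δ : ℝ} (hδ : 0 < δ) :
    ∃ c > 0, ∀ k : ℝ × ℝ, (∀ z ∈ diracSet, δ ≤ dist k z) → c ≤ uncurry hexSymbol k := by
  set T := (Set.Icc 0 (2 * π) ×ˢ Set.Icc 0 (2 * π)) ∩ {k | ∀ z ∈ diracSet, δ ≤ dist k z}
  have hT : IsCompact T := by
    refine (isCompact_Icc.prod isCompact_Icc).inter_right ?_
    simp only [Set.ofPred_forall]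
    exact isClosed_biInter fun z _ =>
      isClosed_le continuous_const (continuous_id.dist continuous_const)
  have hpos : ∀ k ∈ T, 0 < uncurry hexSymbol k := fun k hk =>
    (hexSymbol_nonneg k).lt_of_ne fun h =>
      (hk.2 k (mem_diracSet_of_hexSymbol_eq_zero h.symm)).not_gt (by rwa [dist_self])
  obtain ⟨c, hc, hcT⟩ := hT.exists_forall_le' continuous_uncurry_hexSymbol.continuousOn hpos
  refine ⟨c, hc, fun k hk => ?_⟩
  obtain ⟨m, hm⟩ := exists_add_latticeVec_mem_Icc k
  rw [← hexSymbol_add_latticeVec k m]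
  refine hcT _ ⟨hm, fun z hz => ?_⟩
  have h := hk _ (add_latticeVec_mem_diracSet hz (-m))
  rw [dist_eq_norm] at h ⊢
  convert h using 2
  rw [latticeVec_neg]; abel

lemma hexSymbol_diracPoint_add (p : ℝ × ℝ) :
    uncurry hexSymbol (diracPoint + p) = 3 - cos p.1 - √3 * sin p.1 - cos p.2 + √3 * sin p.2
      - cos (p.1 - p.2) + √3 * sin (p.1 - p.2) := by
  have hdiff : 2 * π / 3 + p.1 - (-(2 * π / 3) + p.2) = 2 * π / 3 + (p.1 - p.2) + 2 * π / 3 := by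
    ring
  have h3 : √3 ^ 2 = 3 := Real.sq_sqrt (by norm_num)
  simp only [uncurry, hexSymbol, diracPoint, Prod.fst_add, Prod.snd_add, hdiff, cos_add, sin_add,
    cos_neg, sin_neg, cos_two_pi_div_three, sin_two_pi_div_three]
  linear_combination (-(cos (p.1 - p.2)) / 2) * h3

lemma abs_cos_sub_one_sub_sq_div_two_le {x : ℝ} (hx : |x| ≤ 1) :
    |cos x - (1 - x ^ 2 / 2)| ≤ |x| ^ 3 / 6 := by
  have h43 : |x| ^ 4 ≤ |x| ^ 3 := pow_le_pow_of_le_one (abs_nonneg x) hx (by norm_num)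
  linarith [cos_bound hx, pow_nonneg (abs_nonneg x) 3]

def diracCone (p : ℝ × ℝ) : ℝ := p.1 ^ 2 - p.1 * p.2 + p.2 ^ 2

lemma diracCone_nonneg (p : ℝ × ℝ) : 0 ≤ diracCone p := by
  unfold diracCone
  nlinarith [sq_nonneg (p.1 - p.2), sq_nonneg p.1, sq_nonneg p.2]

lemma norm_sq_le_two_mul_diracCone (p : ℝ × ℝ) : ‖p‖ ^ 2 ≤ 2 * diracCone p := by
  rw [diracCone, Prod.norm_def, Real.norm_eq_abs, Real.norm_eq_abs]
  rcases max_cases |p.1| |p.2| with ⟨h, _⟩ | ⟨h, _⟩ <;> rw [h, sq_abs] <;>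
    nlinarith [sq_nonneg (p.1 - p.2)]

lemma abs_hexSymbol_diracPoint_add_sub_diracCone_le {p : ℝ × ℝ} (hp : ‖p‖ ≤ 1 / 2) :
    |uncurry hexSymbol (diracPoint + p) - diracCone p| ≤ 5 * ‖p‖ ^ 3 := by
  obtain ⟨a, b⟩ := p
  have ha : |a| ≤ ‖(a, b)‖ := le_max_left _ _
  have hb : |b| ≤ ‖(a, b)‖ := le_max_right _ _
  have hab : |a - b| ≤ 2 * ‖(a, b)‖ := (abs_sub a b).trans (by linarith)
  have hcubes : |a| ^ 3 + |b| ^ 3 + |a - b| ^ 3 ≤ 10 * ‖(a, b)‖ ^ 3 := by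
    have := pow_le_pow_left₀ (abs_nonneg _) ha 3
    have := pow_le_pow_left₀ (abs_nonneg _) hb 3
    have := pow_le_pow_left₀ (abs_nonneg _) hab 3
    linarith
  have hS : ∀ y, |√3 * (sin y - y)| ≤ |y| ^ 3 / 3 := fun y => by
    have h3 : √3 ≤ 2 := Real.sqrt_le_iff.2 ⟨by norm_num, by norm_num⟩
    rw [abs_mul, abs_of_nonneg (Real.sqrt_nonneg 3), abs_sub_comm]
    nlinarith [abs_sub_sin_le y, abs_nonneg (y - sin y)]
  have hremainder : uncurry hexSymbol (diracPoint + (a, b)) - diracCone (a, b)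
      = -(cos a - (1 - a ^ 2 / 2)) - (cos b - (1 - b ^ 2 / 2))
        - (cos (a - b) - (1 - (a - b) ^ 2 / 2))
        - √3 * (sin a - a) + √3 * (sin b - b) + √3 * (sin (a - b) - (a - b)) := by
    rw [hexSymbol_diracPoint_add, diracCone]; ring
  have h1 := abs_le.1 (abs_cos_sub_one_sub_sq_div_two_le (x := a) (by linarith))
  have h2 := abs_le.1 (abs_cos_sub_one_sub_sq_div_two_le (x := b) (by linarith))
  have h3 := abs_le.1 (abs_cos_sub_one_sub_sq_div_two_le (x := a - b) (by linarith))
  have h4 := abs_le.1 (hS a)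
  have h5 := abs_le.1 (hS b)
  have h6 := abs_le.1 (hS (a - b))
  rw [hremainder, abs_le]
  constructor <;> linarith

lemma one_le_intCast_sq {s : ℤ} (hs : s ≠ 0) : (1 : ℝ) ≤ (s : ℝ) ^ 2 :=
  (one_le_sq_iff_one_le_abs _).2 (by exact_mod_cast Int.one_le_abs hs)

def chiralLine (t₁ t₂ : ℤ) : Set (ℝ × ℝ) :=
  {k | ∃ n : ℤ, (t₁ : ℝ) * k.1 + (t₂ : ℝ) * k.2 = 2 * π * n}

lemma gapEps_eq (q : ℝ) (t₁ t₂ : ℤ) :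
    gapEps q t₁ t₂ = sInf ((fun k => √(uncurry hexSymbol k + q ^ 2)) '' chiralLine t₁ t₂) - q :=
  rfl

section chiralLine

variable {t₁ t₂ : ℤ} {k : ℝ × ℝ}

lemma neg_mem_chiralLine (hk : k ∈ chiralLine t₁ t₂) : -k ∈ chiralLine t₁ t₂ := by
  obtain ⟨n, hn⟩ := hk
  exact ⟨-n, by simp only [Prod.fst_neg, Prod.snd_neg, Int.cast_neg]; linear_combination -hn⟩

lemma add_latticeVec_mem_chiralLine (hk : k ∈ chiralLine t₁ t₂) (m : ℤ × ℤ) :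
    k + latticeVec m ∈ chiralLine t₁ t₂ := by
  obtain ⟨n, hn⟩ := hk
  refine ⟨n + t₁ * m.1 + t₂ * m.2, ?_⟩
  simp only [latticeVec, Prod.fst_add, Prod.snd_add]
  push_cast
  linear_combination hn

lemma exists_diracPoint_add_of_mem_diracSet {z : ℝ × ℝ} (hk : k ∈ chiralLine t₁ t₂)
    (hz : z ∈ diracSet) :
    ∃ p : ℝ × ℝ, ‖p‖ = dist k z ∧ diracPoint + p ∈ chiralLine t₁ t₂ ∧
      uncurry hexSymbol (diracPoint + p) = uncurry hexSymbol k := by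
  obtain ⟨m, h | h⟩ := hz
  · have hp : diracPoint + (k - z) = k + latticeVec m := by rw [← h]; abel
    exact ⟨k - z, (dist_eq_norm k z).symm, hp ▸ add_latticeVec_mem_chiralLine hk m,
      by rw [hp, hexSymbol_add_latticeVec]⟩
  · have hp : diracPoint + (z - k) = -k + latticeVec m := by rw [← h]; abel
    exact ⟨z - k, (dist_eq_norm' k z).symm,
      hp ▸ add_latticeVec_mem_chiralLine (neg_mem_chiralLine hk) m,
      by rw [hp, hexSymbol_add_latticeVec, hexSymbol_neg]⟩

lemma sq_le_of_diracPoint_add_mem_chiralLine (hd : ¬ (3 : ℤ) ∣ t₁ - t₂) {p : ℝ × ℝ}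
    (hp : diracPoint + p ∈ chiralLine t₁ t₂) :
    (2 * π / 3) ^ 2 ≤ ((t₁ : ℝ) * p.1 + t₂ * p.2) ^ 2 := by
  obtain ⟨n, hn⟩ := hp
  have hj : 3 * n - (t₁ - t₂) ≠ 0 := fun h => hd ⟨n, by linarith⟩
  have htp : (t₁ : ℝ) * p.1 + t₂ * p.2 = 2 * π / 3 * ((3 * n - (t₁ - t₂) : ℤ) : ℝ) := by
    simp only [diracPoint, Prod.fst_add, Prod.snd_add] at hn
    push_cast
    linear_combination hn
  rw [htp, mul_pow]
  exact le_mul_of_one_le_right (by positivity) (one_le_intCast_sq hj)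

end chiralLine

lemma sq_mul_add_mul_le_mul_diracCone (t₁ t₂ : ℝ) (p : ℝ × ℝ) :
    (t₁ * p.1 + t₂ * p.2) ^ 2
      ≤ 4 / 3 * (t₁ ^ 2 + t₁ * t₂ + t₂ ^ 2) * diracCone p := by
  unfold diracCone
  nlinarith [sq_nonneg ((p.1 - 2 * p.2) * t₁ + (2 * p.1 - p.2) * t₂)]

lemma le_hexSymbol_diracPoint_add {t₁ t₂ : ℝ} {p : ℝ × ℝ} (hp : ‖p‖ ≤ 1 / 30)
    (ht : (2 * π / 3) ^ 2 ≤ (t₁ * p.1 + t₂ * p.2) ^ 2) :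
    π ^ 2 / (3 * (t₁ ^ 2 + t₁ * t₂ + t₂ ^ 2)) - 5000 / √(t₁ ^ 2 + t₂ ^ 2) ^ 3
      ≤ uncurry hexSymbol (diracPoint + p) := by
  set S := t₁ ^ 2 + t₁ * t₂ + t₂ ^ 2
  set Q := diracCone p
  set N := √(t₁ ^ 2 + t₂ ^ 2)
  have hQ : 0 ≤ Q := diracCone_nonneg p
  have hSQ : π ^ 2 / 3 ≤ S * Q := by nlinarith [sq_mul_add_mul_le_mul_diracCone t₁ t₂ p]
  have hS : 0 < S := pos_of_mul_pos_left ((by positivity : (0 : ℝ) < π ^ 2 / 3).trans_le hSQ) hQ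
  have hmQ : π ^ 2 / (3 * S) ≤ Q := by rw [div_le_iff₀ (by positivity)]; linarith
  have hN2 : N ^ 2 = t₁ ^ 2 + t₂ ^ 2 := Real.sq_sqrt (by positivity)
  have hNS : N ^ 2 ≤ 2 * S := by rw [hN2]; nlinarith [sq_nonneg (t₁ + t₂)]
  have hN : 0 < N := by
    refine Real.sqrt_pos.2 ?_
    nlinarith [sq_nonneg (t₁ - t₂)]
  have hx : ‖p‖ ^ 2 ≤ 2 * Q := norm_sq_le_two_mul_diracCone p
  have hf : Q - 5 * ‖p‖ ^ 3 ≤ uncurry hexSymbol (diracPoint + p) := by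
    have := abs_hexSymbol_diracPoint_add_sub_diracCone_le (p := p) (by linarith)
    linarith [(abs_le.1 this).1]
  have hE : 0 < 5000 / N ^ 3 := by positivity
  -- Either `Q` is within a factor 4 of its lower bound, so that `‖p‖ = O(1/N)` and the cubic
  -- error is `O(N⁻³)`, or the cubic error is absorbed by `Q` itself.
  rcases le_or_gt Q (4 * (π ^ 2 / (3 * S))) with hsmall | hlarge
  · have hxN : (‖p‖ * N) ^ 2 ≤ 10 ^ 2 := by
      have hπ : π ^ 2 ≤ 16 := by nlinarith [pi_le_four, pi_pos]
      rw [mul_div_assoc', le_div_iff₀ (by positivity)] at hsmall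
      nlinarith [mul_le_mul_of_nonneg_left hNS (sq_nonneg ‖p‖)]
    have hxN' : ‖p‖ * N ≤ 10 :=
      (pow_le_pow_iff_left₀ (by positivity) (by norm_num) two_ne_zero).1 hxN
    have hcube : 5 * ‖p‖ ^ 3 ≤ 5000 / N ^ 3 := by
      have := pow_le_pow_left₀ (by positivity) hxN' 3
      rw [le_div_iff₀ (by positivity)]
      rw [mul_pow] at this
      linarith
    linarith
  · have hcube : 5 * ‖p‖ ^ 3 ≤ Q / 3 := by
      nlinarith [mul_le_mul_of_nonneg_left hp (sq_nonneg ‖p‖)]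
    linarith

lemma hexSymbol_diracPoint_add_le_diracCone_add (p : ℝ × ℝ) :
    uncurry hexSymbol (diracPoint + p) ≤ diracCone p + 72 * ‖p‖ ^ 3 := by
  rcases le_or_gt ‖p‖ (1 / 2) with hp | hp
  · linarith [(abs_le.1 (abs_hexSymbol_diracPoint_add_sub_diracCone_le hp)).2,
      pow_nonneg (norm_nonneg p) 3]
  · have : 1 / 8 < ‖p‖ ^ 3 := by nlinarith [pow_lt_pow_left₀ hp (by norm_num) three_ne_zero]
    linarith [hexSymbol_le_nine (diracPoint + p), diracCone_nonneg p]

lemma one_le_sq_add_sq_of_not_dvd {t₁ t₂ : ℤ} (hd : ¬ (3 : ℤ) ∣ t₁ - t₂) :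
    (1 : ℝ) ≤ (t₁ : ℝ) ^ 2 + (t₂ : ℝ) ^ 2 := by
  rcases eq_or_ne t₁ 0 with rfl | h₁
  · have h₂ : t₂ ≠ 0 := by rintro rfl; exact hd (by norm_num)
    simpa using one_le_intCast_sq h₂
  · linarith [one_le_intCast_sq h₁, sq_nonneg (t₂ : ℝ)]

lemma pi_sq_div_three_mul_le {t₁ t₂ : ℝ} (ht : 0 < t₁ ^ 2 + t₂ ^ 2) :
    π ^ 2 / (3 * (t₁ ^ 2 + t₁ * t₂ + t₂ ^ 2)) ≤ 11 / (t₁ ^ 2 + t₂ ^ 2) := by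
  have hS : t₁ ^ 2 + t₂ ^ 2 ≤ 2 * (t₁ ^ 2 + t₁ * t₂ + t₂ ^ 2) := by nlinarith [sq_nonneg (t₁ + t₂)]
  have hπ : π ^ 2 ≤ 16 := by nlinarith [pi_le_four, pi_pos]
  rw [div_le_div_iff₀ (by linarith) ht]
  nlinarith [mul_le_mul_of_nonneg_right hπ ht.le]

/-- The witness is `K + p` with `p` the minimizer of the Dirac cone on the shifted chiral line. -/
lemma exists_mem_chiralLine_hexSymbol_le {t₁ t₂ : ℤ} (hd : ¬ (3 : ℤ) ∣ t₁ - t₂) :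
    ∃ k ∈ chiralLine t₁ t₂, uncurry hexSymbol k ≤
      π ^ 2 / (3 * ((t₁ : ℝ) ^ 2 + t₁ * t₂ + t₂ ^ 2)) + 16000 / √((t₁ : ℝ) ^ 2 + t₂ ^ 2) ^ 3 := by
  obtain ⟨σ, hσ, j, hj⟩ : ∃ σ : ℤ, (σ : ℝ) ^ 2 = 1 ∧ 3 ∣ t₁ - t₂ - σ := by
    rcases (by omega : (t₁ - t₂) % 3 = 1 ∨ (t₁ - t₂) % 3 = 2) with h | h
    · exact ⟨1, by norm_num, by omega⟩
    · exact ⟨-1, by norm_num, by omega⟩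
  set S : ℝ := (t₁ : ℝ) ^ 2 + t₁ * t₂ + t₂ ^ 2
  set N := √((t₁ : ℝ) ^ 2 + t₂ ^ 2)
  have hn := one_le_sq_add_sq_of_not_dvd hd
  have hN2 : N ^ 2 = (t₁ : ℝ) ^ 2 + t₂ ^ 2 := Real.sq_sqrt (by positivity)
  have hNS : N ^ 2 ≤ 2 * S := by rw [hN2]; nlinarith [sq_nonneg ((t₁ : ℝ) + t₂)]
  have hS : 0 < S := by nlinarith
  have hN : 0 < N := Real.sqrt_pos.2 (by positivity)
  set c := -(σ : ℝ) * π / (3 * S)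
  have hcS : c * S = -(σ : ℝ) * π / 3 := by simp only [c]; field_simp
  have hcS2 : (c * S) ^ 2 = π ^ 2 / 9 := by rw [hcS]; linear_combination π ^ 2 / 9 * hσ
  set p : ℝ × ℝ := (c * (2 * t₁ + t₂), c * (t₁ + 2 * t₂))
  have hQ : diracCone p = π ^ 2 / (3 * S) := by
    rw [diracCone, eq_div_iff (by positivity)]; linear_combination 9 * hcS2
  have hcoord : ∀ u : ℝ, u ^ 2 ≤ 5 * N ^ 2 → |c * u| ≤ 6 / N := fun u hu => by
    have hπ : π ^ 2 ≤ 16 := by nlinarith [pi_le_four, pi_pos]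
    have hsq : (c * u * N) ^ 2 * (9 * S ^ 2) ≤ 6 ^ 2 * (9 * S ^ 2) := calc
      (c * u * N) ^ 2 * (9 * S ^ 2) = 9 * (c * S) ^ 2 * (u ^ 2 * N ^ 2) := by ring
      _ ≤ 16 * (5 * N ^ 2 * N ^ 2) := by
        rw [hcS2]; gcongr; linarith
      _ ≤ 6 ^ 2 * (9 * S ^ 2) := by nlinarith
    have := abs_le_of_sq_le_sq (le_of_mul_le_mul_right hsq (by positivity)) (by norm_num)
    rwa [abs_mul, abs_of_pos hN, ← le_div_iff₀ hN] at this
  have hp : ‖p‖ ≤ 6 / N := max_le (hcoord _ (by nlinarith [sq_nonneg ((t₁ : ℝ) - 2 * t₂)]))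
    (hcoord _ (by nlinarith [sq_nonneg (2 * (t₁ : ℝ) - t₂)]))
  refine ⟨diracPoint + p, ⟨j, ?_⟩, ?_⟩
  · have hj' : (t₁ : ℝ) - t₂ - σ = 3 * j := by exact_mod_cast hj
    simp only [diracPoint, p, Prod.fst_add, Prod.snd_add]
    linear_combination 2 * π / 3 * hj' + 2 * hcS
  · calc uncurry hexSymbol (diracPoint + p) ≤ π ^ 2 / (3 * S) + 72 * ‖p‖ ^ 3 :=
          hQ ▸ hexSymbol_diracPoint_add_le_diracCone_add p
      _ ≤ π ^ 2 / (3 * S) + 72 * (6 / N) ^ 3 := by gcongr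
      _ ≤ π ^ 2 / (3 * S) + 16000 / N ^ 3 := by
          rw [div_pow]; gcongr _ + ?_; rw [mul_div_assoc']; gcongr; norm_num

lemma exists_le_hexSymbol_of_mem_chiralLine : ∃ A > (0 : ℝ), ∀ t₁ t₂ : ℤ, ¬ (3 : ℤ) ∣ t₁ - t₂ →
    ∀ k ∈ chiralLine t₁ t₂, π ^ 2 / (3 * ((t₁ : ℝ) ^ 2 + t₁ * t₂ + t₂ ^ 2))
      - A / √((t₁ : ℝ) ^ 2 + t₂ ^ 2) ^ 3 ≤ uncurry hexSymbol k := by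
  obtain ⟨c, hc, hfar⟩ := exists_pos_le_hexSymbol_of_le_dist (by norm_num : (0 : ℝ) < 1 / 30)
  refine ⟨5000 + 121 / c, by positivity, fun t₁ t₂ hd k hk => ?_⟩
  set N := √((t₁ : ℝ) ^ 2 + t₂ ^ 2)
  have hn := one_le_sq_add_sq_of_not_dvd hd
  have hN1 : 1 ≤ N := Real.one_le_sqrt.2 hn
  have hm : π ^ 2 / (3 * ((t₁ : ℝ) ^ 2 + t₁ * t₂ + t₂ ^ 2)) ≤ 11 / N ^ 2 := by
    rw [Real.sq_sqrt (by positivity)]; exact pi_sq_div_three_mul_le (by positivity)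
  have hA : 0 ≤ (121 / c) / N ^ 3 := by positivity
  rw [add_div]
  by_cases hnear : ∃ z ∈ diracSet, dist k z < 1 / 30
  · obtain ⟨z, hz, hkz⟩ := hnear
    obtain ⟨p, hp, hpk, hfp⟩ := exists_diracPoint_add_of_mem_diracSet hk hz
    have := le_hexSymbol_diracPoint_add (hp ▸ hkz.le)
      (sq_le_of_diracPoint_add_mem_chiralLine hd hpk)
    rw [hfp] at this
    linarith
  · push Not at hnear
    have hf := hfar k hnear
    have hE : 0 ≤ 5000 / N ^ 3 := by positivity
    -- Here `f ≥ c`, which exceeds the main term `≤ 11/N²` unless `cN < 11`; in that case the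
    -- claimed lower bound is negative.
    rcases le_or_gt (11 / N ^ 2) c with h | h
    · linarith
    · have hNc : c * N < 11 := by
        rw [lt_div_iff₀ (by positivity)] at h; nlinarith
      have : 11 / N ^ 2 ≤ (121 / c) / N ^ 3 := by
        rw [div_le_div_iff₀ (by positivity) (by positivity), div_mul_eq_mul_div,
          le_div_iff₀ hc]
        nlinarith [pow_pos (by positivity : (0 : ℝ) < N) 2]
      linarith [hexSymbol_nonneg k]

lemma sqrt_add_sq_sub_le {q x : ℝ} (hq : 0 < q) (hx : 0 ≤ x) : √(x + q ^ 2) - q ≤ x / (2 * q) := by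
  have h : √(x + q ^ 2) ≤ q + x / (2 * q) := by
    refine Real.sqrt_le_iff.2 ⟨by positivity, ?_⟩
    have : (q + x / (2 * q)) ^ 2 = x + q ^ 2 + (x / (2 * q)) ^ 2 := by field_simp; ring
    nlinarith [sq_nonneg (x / (2 * q))]
  linarith

lemma le_sqrt_add_sq_sub {q x : ℝ} (hq : 0 < q) (hx : 0 ≤ x) :
    x / (2 * q) - x ^ 2 / (8 * q ^ 3) ≤ √(x + q ^ 2) - q := by
  set s := √(x + q ^ 2)
  have hs : s ^ 2 = x + q ^ 2 := Real.sq_sqrt (by positivity)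
  have hqs : q ≤ s := Real.le_sqrt_of_sq_le (by linarith)
  have key : 8 * q ^ 4 + 4 * q ^ 2 * x - x ^ 2 ≤ 8 * q ^ 3 * s := by
    nlinarith [mul_nonneg (pow_nonneg (sub_nonneg.2 hqs) 3) (by linarith : (0 : ℝ) ≤ s + 3 * q)]
  have h : x / (2 * q) - x ^ 2 / (8 * q ^ 3)
      = (8 * q ^ 4 + 4 * q ^ 2 * x - x ^ 2) / (8 * q ^ 3) - q := by
    field_simp; ring
  rw [h, sub_le_sub_iff_right, div_le_iff₀ (by positivity)]
  linarith

section gapEps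

variable {q : ℝ} {t₁ t₂ : ℤ}

lemma gapEps_le {k : ℝ × ℝ} (hq : 0 < q) (hk : k ∈ chiralLine t₁ t₂) :
    gapEps q t₁ t₂ ≤ uncurry hexSymbol k / (2 * q) := by
  have h := csInf_le ⟨0, Set.forall_mem_image.2 fun _ _ => Real.sqrt_nonneg _⟩
    (Set.mem_image_of_mem (fun k => √(uncurry hexSymbol k + q ^ 2)) hk)
  rw [gapEps_eq]
  linarith [sqrt_add_sq_sub_le hq (hexSymbol_nonneg k)]

lemma le_gapEps {L : ℝ} (hq : 0 < q) (hL : 0 ≤ L)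
    (h : ∀ k ∈ chiralLine t₁ t₂, L ≤ uncurry hexSymbol k) :
    L / (2 * q) - L ^ 2 / (8 * q ^ 3) ≤ gapEps q t₁ t₂ := by
  have hzero : (0 : ℝ × ℝ) ∈ chiralLine t₁ t₂ := ⟨0, by simp⟩
  have hinf : √(L + q ^ 2) ≤ sInf ((fun k => √(uncurry hexSymbol k + q ^ 2)) '' chiralLine t₁ t₂) :=
    le_csInf (Set.image_nonempty.2 ⟨0, hzero⟩) <| Set.forall_mem_image.2 fun k hk =>
      Real.sqrt_le_sqrt (by linarith [h k hk])
  rw [gapEps_eq]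
  linarith [le_sqrt_add_sq_sub hq hL]

lemma abs_gapEps_sub_le {m e₁ e₂ : ℝ} (hq : 0 < q) (he₁ : 0 ≤ e₁) (he₂ : 0 ≤ e₂)
    (hlow : ∀ k ∈ chiralLine t₁ t₂, m - e₁ ≤ uncurry hexSymbol k)
    (hup : ∃ k ∈ chiralLine t₁ t₂, uncurry hexSymbol k ≤ m + e₂) :
    |gapEps q t₁ t₂ - m / (2 * q)| ≤ (e₁ + e₂) / (2 * q) + m ^ 2 / (8 * q ^ 3) := by
  set L := max 0 (m - e₁)
  have hL0 : 0 ≤ L := le_max_left _ _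
  have hL : m - e₁ ≤ L := le_max_right _ _
  have hLm : L ^ 2 ≤ m ^ 2 := by
    rw [← sq_abs m]
    exact pow_le_pow_left₀ hL0 (max_le (abs_nonneg m) (by linarith [le_abs_self m])) 2
  have hlower := le_gapEps hq hL0 fun k hk => max_le (hexSymbol_nonneg k) (hlow k hk)
  obtain ⟨k, hk, hfk⟩ := hup
  have hupper := gapEps_le hq hk
  have h1 : (m - e₁) / (2 * q) ≤ L / (2 * q) := by gcongr
  have h2 : L ^ 2 / (8 * q ^ 3) ≤ m ^ 2 / (8 * q ^ 3) := by gcongr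
  have h3 : uncurry hexSymbol k / (2 * q) ≤ (m + e₂) / (2 * q) := by gcongr
  have h4 : 0 ≤ e₁ / (2 * q) := by positivity
  have h5 : 0 ≤ e₂ / (2 * q) := by positivity
  have h6 : 0 ≤ m ^ 2 / (8 * q ^ 3) := by positivity
  rw [sub_div] at h1
  rw [add_div] at h3
  rw [abs_le, add_div]
  constructor <;> linarith

end gapEps

/-- for coprime `(t₁,t₂)` with `3 ∤ t₁ − t₂`,
`ε(t₁,t₂) = π²/(6q(t₁²+t₁t₂+t₂²)) + O((t₁²+t₂²)^{−3/2})` uniformly. -/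
theorem stmt_13 (q : ℝ) (hq : 0 < q) :
    ∃ C > (0:ℝ), ∀ t₁ t₂ : ℤ, IsCoprime t₁ t₂ → ¬ ((3:ℤ) ∣ t₁ - t₂) →
      |gapEps q t₁ t₂ - π^2 / (6*q*((t₁:ℝ)^2 + (t₁:ℝ)*(t₂:ℝ) + (t₂:ℝ)^2))|
        ≤ C / Real.sqrt ((t₁:ℝ)^2 + (t₂:ℝ)^2) ^ 3 := by
  obtain ⟨A, hA, hlow⟩ := exists_le_hexSymbol_of_mem_chiralLine
  refine ⟨(A + 16000) / (2 * q) + 121 / (8 * q ^ 3), by positivity, fun t₁ t₂ _ hd => ?_⟩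
  set S : ℝ := (t₁ : ℝ) ^ 2 + t₁ * t₂ + t₂ ^ 2
  set N := √((t₁ : ℝ) ^ 2 + t₂ ^ 2)
  have hn := one_le_sq_add_sq_of_not_dvd hd
  have hN1 : 1 ≤ N := Real.one_le_sqrt.2 hn
  have hS : 0 ≤ S := by nlinarith [sq_nonneg ((t₁ : ℝ) + t₂)]
  have hm : π ^ 2 / (3 * S) ≤ 11 / N ^ 2 := by
    rw [Real.sq_sqrt (by positivity)]; exact pi_sq_div_three_mul_le (by positivity)
  have hm2 : (π ^ 2 / (3 * S)) ^ 2 ≤ 121 / N ^ 3 := calc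
    (π ^ 2 / (3 * S)) ^ 2 ≤ (11 / N ^ 2) ^ 2 := by gcongr
    _ = 121 / N ^ 3 / N := by ring
    _ ≤ 121 / N ^ 3 := div_le_self (by positivity) hN1
  have key := abs_gapEps_sub_le hq (by positivity : 0 ≤ A / N ^ 3) (by positivity)
    (hlow t₁ t₂ hd) (exists_mem_chiralLine_hexSymbol_le hd)
  rw [show π ^ 2 / (6 * q * S) = π ^ 2 / (3 * S) / (2 * q) by rw [div_div]; ring_nf]
  calc _ ≤ (A / N ^ 3 + 16000 / N ^ 3) / (2 * q) + (π ^ 2 / (3 * S)) ^ 2 / (8 * q ^ 3) := key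
    _ ≤ (A / N ^ 3 + 16000 / N ^ 3) / (2 * q) + 121 / N ^ 3 / (8 * q ^ 3) := by gcongr
    _ = ((A + 16000) / (2 * q) + 121 / (8 * q ^ 3)) / N ^ 3 := by ring
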